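/- The generating function G(z) = ∑_{n≥0} (1/(rn+1)) * C(rn+1, n) * z^n of Fuss–Catalan numbers satisfies the functional equation G(z) = 1 + z * G(z)^r, for r ≥ 1, as formal power series. -/

import Mathlib

/-!
The coefficients of `G` are the Raney numbers `A_a(k) = a / (a + r k) * C(a + r k, k)` at `a = 1`.
Put `B_a = ∑ A_a(k) z^k`. Two applications of Pascal's rule give `B_{a+1} = B_a + z B_{a+r}`, and
the absorption identity gives `B_0 = 1`. A family `(D_c)_{c ∈ ℕ}` with `D_0 = 0` and
`D_{c+1} = D_c + z D_{c+r}` vanishes, since each `D_c` is divisible by every power of `z`; applied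
to `D_c = B_a B_c - B_{a+c}` this gives `B_a B_c = B_{a+c}`. Hence `G^r = B_1^r = B_r`, and
`G = B_1 = B_0 + z B_r = 1 + z G^r`.
-/

open PowerSeries

theorem PowerSeries.eq_zero_of_succ_eq_add_X_mul {R : Type*} [Semiring R] {D : ℕ → R⟦X⟧}
    (r : ℕ) (h0 : D 0 = 0) (hsucc : ∀ c, D (c + 1) = D c + X * D (c + r)) (c : ℕ) :
    D c = 0 := by
  have hdvd : ∀ n c, X ^ n ∣ D c := by
    intro n
    induction n with
    | zero => simp
    | succ n ih =>
      intro c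
      induction c with
      | zero => simp [h0]
      | succ c ihc =>
        rw [hsucc]
        exact dvd_add ihc (by rw [pow_succ']; exact mul_dvd_mul_left X (ih _))
  ext m
  exact X_pow_dvd_iff.mp (hdvd (m + 1) c) m m.lt_succ_self

theorem Ring.succ_nsmul_choose_succ {R : Type*} [CommRing R] [BinomialRing R] (y : R) (k : ℕ) :
    (k + 1) • choose y (k + 1) = y * choose (y - 1) k := by
  simpa [choose_one_right] using choose_smul_choose y (show 1 ≤ k + 1 by omega)

section Raney

variable {R : Type*} [CommRing R] [BinomialRing R] (r : ℕ)

/-- The Raney number `a / (a + r k) * C(a + r k, k)`, written without division so that it is a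
polynomial in `a`. -/
def raney (a : R) : ℕ → R
  | 0 => 1
  | k + 1 => Ring.choose (a + r * (k + 1)) (k + 1) - r * Ring.choose (a + r * (k + 1) - 1) k

def raneySeries (a : R) : R⟦X⟧ := mk (raney r a)

theorem raney_succ_add_one (a : R) (k : ℕ) :
    raney r (a + 1) (k + 1) = raney r a (k + 1) + raney r (a + r) k := by
  cases k with
  | zero => simp [raney]
  | succ k =>
    set x := a + r * (k + 2)
    have hx := Ring.choose_succ_succ x (k + 1)
    have hx_pred := Ring.choose_succ_succ (x - 1) k
    rw [sub_add_cancel] at hx_pred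
    simp only [raney]
    push_cast
    rw [show a + 1 + r * (k + 1 + 1) = x + 1 by ring, show x + 1 - 1 = x by ring,
      show a + r * (k + 1 + 1) = x by ring, show a + r + r * (k + 1) = x by ring]
    linear_combination hx - (r : R) * hx_pred

theorem raneySeries_add_one (a : R) :
    raneySeries r (a + 1) = raneySeries r a + X * raneySeries r (a + r) := by
  ext (_ | k)
  · simp [raneySeries, raney]
  · simp [raneySeries, coeff_succ_X_mul, raney_succ_add_one]

theorem raneySeries_zero : raneySeries r (0 : R) = 1 := by
  ext (_ | k)
  · simp [raneySeries, raney]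
  · have := BinomialRing.toIsAddTorsionFree (R := R)
    rw [coeff_one, if_neg k.succ_ne_zero, raneySeries, coeff_mk, raney, zero_add, sub_eq_zero]
    apply nsmul_right_injective k.succ_ne_zero
    change (k + 1) • _ = (k + 1) • _
    rw [Ring.succ_nsmul_choose_succ, nsmul_eq_mul]
    push_cast
    ring

theorem raneySeries_mul_natCast (a : R) (c : ℕ) :
    raneySeries r a * raneySeries r (c : R) = raneySeries r (a + c) := by
  refine sub_eq_zero.mp (eq_zero_of_succ_eq_add_X_mul
    (D := fun c : ℕ => raneySeries r a * raneySeries r (c : R) - raneySeries r (a + c)) r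
    (by simp [raneySeries_zero]) (fun c => ?_) c)
  simp only [Nat.cast_add, Nat.cast_one, ← add_assoc, raneySeries_add_one]
  ring

theorem raneySeries_one_pow (s : ℕ) : raneySeries r (1 : R) ^ s = raneySeries r (s : R) := by
  induction s with
  | zero => simp [raneySeries_zero]
  | succ s ih => rw [pow_succ, ih, ← Nat.cast_one, raneySeries_mul_natCast, Nat.cast_add]

end Raney

theorem raney_one (r n : ℕ) :
    raney r (1 : ℚ) n = ((r * n + 1 : ℕ) : ℚ)⁻¹ * (Nat.choose (r * n + 1) n : ℚ) := by
  cases n with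
  | zero => simp [raney]
  | succ k =>
    have habsorb : ((r * (k + 1) + 1 : ℕ) : ℚ) * (r * (k + 1)).choose k =
        (r * (k + 1) + 1).choose (k + 1) * (k + 1) := by
      exact_mod_cast Nat.add_one_mul_choose_eq (r * (k + 1)) k
    simp only [raney]
    rw [show (1 : ℚ) + r * (k + 1) = ((r * (k + 1) + 1 : ℕ) : ℚ) by push_cast; ring,
      show ((r * (k + 1) + 1 : ℕ) : ℚ) - 1 = ((r * (k + 1) : ℕ) : ℚ) by push_cast; ring,
      Ring.choose_natCast, Ring.choose_natCast]
    field_simp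
    push_cast at habsorb ⊢
    linear_combination (-(r : ℚ)) * habsorb

theorem fussCatalan_generating_function_general (r : ℕ) :
    (PowerSeries.mk fun n : ℕ =>
        ((r * n + 1 : ℕ) : ℚ)⁻¹ * (Nat.choose (r * n + 1) n : ℚ)) =
      1 + PowerSeries.X *
        (PowerSeries.mk fun n : ℕ =>
          ((r * n + 1 : ℕ) : ℚ)⁻¹ * (Nat.choose (r * n + 1) n : ℚ)) ^ r := by
  have hG : (PowerSeries.mk fun n : ℕ =>
      ((r * n + 1 : ℕ) : ℚ)⁻¹ * (Nat.choose (r * n + 1) n : ℚ)) = raneySeries r 1 := by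
    ext n
    simp [raneySeries, raney_one]
  have hpascal := raneySeries_add_one r (0 : ℚ)
  rw [zero_add, zero_add, raneySeries_zero] at hpascal
  rw [hG, raneySeries_one_pow, ← hpascal]

/-- The generating function `G(z) = ∑_{n≥0} (1/(rn+1)) * C(rn+1, n) * z^n` of the
Fuss–Catalan numbers of order `r ≥ 1` satisfies the functional equation
`G(z) = 1 + z * G(z)^r` as formal power series. -/
theorem fussCatalan_generating_function (r : ℕ) (hr : 1 ≤ r) :
    (PowerSeries.mk fun n : ℕ =>
        ((r * n + 1 : ℕ) : ℚ)⁻¹ * (Nat.choose (r * n + 1) n : ℚ)) =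
      1 + PowerSeries.X *
        (PowerSeries.mk fun n : ℕ =>
          ((r * n + 1 : ℕ) : ℚ)⁻¹ * (Nat.choose (r * n + 1) n : ℚ)) ^ r :=
  fussCatalan_generating_function_general r
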